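/- arXiv:1907.05316 — 4 statements merged into one kernel-verified Lean document; each statement's English description precedes it below -/
import Mathlib

section
/- Let C be a linear code of length n over the finite field F_q, let i ∈ {1,…,n} and let R ⊆ {1,…,n} with i ∉ R. Then R is a minimal recovery set for coordinate i if and only if there exists a minimal codeword w ∈ C⊥ such that supp(w) = R ∪ {i}. -/
/-- The projection map onto the coordinates in `S ⊆ {1,…,n}`. -/
def projMap (F : Type*) [Field F] {n : ℕ} (S : Finset (Fin n)) :
    (Fin n → F) →ₗ[F] ({j // j ∈ S} → F) :=
  LinearMap.funLeft F F (fun j => j.1)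

/-- `dim C(S)`: the dimension of the projection of the code `C` onto the coordinates in `S`. -/
noncomputable def projDim (F : Type*) [Field F] {n : ℕ}
    (C : Submodule F (Fin n → F)) (S : Finset (Fin n)) : ℕ :=
  Module.finrank F (C.map (projMap F S))

/-- `R` is a recovery set for coordinate `i` of the code `C`:
`i ∉ R` and `dim C(R) = dim C(R ∪ {i})`. -/
def IsRecoverySet (F : Type*) [Field F] {n : ℕ}
    (C : Submodule F (Fin n → F)) (i : Fin n) (R : Finset (Fin n)) : Prop :=
  i ∉ R ∧ projDim F C R = projDim F C (insert i R)

/-- `w` belongs to the dual code `C⊥`. -/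
def MemDual {F : Type*} [Field F] [Fintype F] {n : ℕ}
    (C : Submodule F (Fin n → F)) (w : Fin n → F) : Prop :=
  ∀ x ∈ C, ∑ j, w j * x j = 0

lemma recovery_iff_exists
    {F : Type*} [Field F] [Fintype F] {n : ℕ}
    (C : Submodule F (Fin n → F)) (i : Fin n) (R : Finset (Fin n)) (hiR : i ∉ R) :
    IsRecoverySet F C i R ↔
      ∃ w : Fin n → F, MemDual C w ∧ w i ≠ 0 ∧
        Function.support w ⊆ ↑(insert i R) := by
  classical
  set S' := insert i R with hS'
  have hiS' : i ∈ S' := Finset.mem_insert_self i R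
  let incl : {j // j ∈ R} → {j // j ∈ S'} :=
    fun j => ⟨j.1, Finset.mem_insert_of_mem j.2⟩
  let r' : ({j // j ∈ S'} → F) →ₗ[F] ({j // j ∈ R} → F) := LinearMap.funLeft F F incl
  have hcomp : projMap F R = r'.comp (projMap F S') := rfl
  set M := C.map (projMap F S') with hM
  let f : M →ₗ[F] ({j // j ∈ R} → F) := r'.comp M.subtype
  have hrange : LinearMap.range f = M.map r' := by
    rw [LinearMap.range_comp, Submodule.range_subtype]
  have hdim : projDim F C R = Module.finrank F (LinearMap.range f) := by
    rw [projDim, hcomp, Submodule.map_comp, hrange]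
  have hrn := LinearMap.finrank_range_add_finrank_ker f
  have key : IsRecoverySet F C i R ↔ Function.Injective f := by
    rw [IsRecoverySet, hdim, ← LinearMap.ker_eq_bot]
    have : projDim F C S' = Module.finrank F M := rfl
    rw [this]
    constructor
    · rintro ⟨-, h⟩
      have h0 : Module.finrank F (LinearMap.ker f) = 0 := by omega
      exact Submodule.finrank_eq_zero.mp h0
    · intro h
      refine ⟨hiR, ?_⟩
      rw [h, finrank_bot] at hrn
      omega
  constructor
  · -- recovery → exists w
    intro hrec
    have finj : Function.Injective f := key.mp hrec
    let e : M ≃ₗ[F] LinearMap.range f := LinearEquiv.ofInjective f finj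
    let ev : M →ₗ[F] F := (LinearMap.proj (⟨i, hiS'⟩ : {j // j ∈ S'})).comp M.subtype
    let g0 : LinearMap.range f →ₗ[F] F := ev.comp e.symm.toLinearMap
    obtain ⟨G, hG⟩ := LinearMap.exists_extend g0
    -- key evaluation: for x ∈ C, G (x restricted to R) = x i
    have hGeval : ∀ x ∈ C, G (fun j : {j // j ∈ R} => x j.1) = x i := by
      intro x hx
      have hmem : projMap F S' x ∈ M := Submodule.mem_map_of_mem hx
      set m : M := ⟨projMap F S' x, hmem⟩ with hm
      have hfm : f m = fun j : {j // j ∈ R} => x j.1 := rfl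
      have hmemr : (fun j : {j // j ∈ R} => x j.1) ∈ LinearMap.range f :=
        ⟨m, hfm⟩
      have h1 : G (fun j : {j // j ∈ R} => x j.1)
          = g0 ⟨fun j : {j // j ∈ R} => x j.1, hmemr⟩ := by
        conv_lhs => rw [show (fun j : {j // j ∈ R} => x j.1)
          = (LinearMap.range f).subtype ⟨fun j : {j // j ∈ R} => x j.1, hmemr⟩ from rfl]
        rw [← LinearMap.comp_apply, hG]
      rw [h1]
      have h2 : (⟨fun j : {j // j ∈ R} => x j.1, hmemr⟩ : LinearMap.range f) = e m := by
        apply Subtype.ext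
        simp [e, LinearEquiv.ofInjective_apply, hfm]
      rw [h2]
      show ev (e.symm (e m)) = x i
      rw [LinearEquiv.symm_apply_apply]
      rfl
    refine ⟨fun j => if hj : j = i then -1 else if h : j ∈ R then
        G (fun k : {j // j ∈ R} => if (⟨j, h⟩ : {j // j ∈ R}) = k then 1 else 0) else 0,
      ?_, ?_, ?_⟩
    · -- MemDual
      intro x hx
      rw [← Finset.sum_erase_add _ _ (Finset.mem_univ i)]
      have hstep : ∀ j ∈ Finset.univ.erase i,
          (if hj : j = i then -1 else if h : j ∈ R then
            G (fun k : {j // j ∈ R} => if (⟨j, h⟩ : {j // j ∈ R}) = k then 1 else 0) else 0) * x j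
          = if h : j ∈ R then
            G (fun k : {j // j ∈ R} => if (⟨j, h⟩ : {j // j ∈ R}) = k then 1 else 0) * x j else 0 := by
        intro j hj
        rcases Finset.mem_erase.mp hj with ⟨hji, -⟩
        rw [dif_neg hji]
        by_cases h : j ∈ R
        · rw [dif_pos h, dif_pos h]
        · rw [dif_neg h, dif_neg h, zero_mul]
      rw [Finset.sum_congr rfl hstep]
      have hsub : R ⊆ Finset.univ.erase i := by
        intro j hj
        exact Finset.mem_erase.mpr ⟨fun h => hiR (h ▸ hj), Finset.mem_univ j⟩
      have hvan : ∀ j ∈ Finset.univ.erase i, j ∉ R →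
          (if h : j ∈ R then
            G (fun k : {j // j ∈ R} => if (⟨j, h⟩ : {j // j ∈ R}) = k then 1 else 0) * x j
           else 0) = 0 := by
        intro j _ hj; rw [dif_neg hj]
      rw [← Finset.sum_subset hsub hvan]
      have hattach := Finset.sum_attach R (fun j =>
          if h : j ∈ R then
            G (fun k : {j // j ∈ R} => if (⟨j, h⟩ : {j // j ∈ R}) = k then 1 else 0) * x j
          else 0)
      rw [← hattach]
      have hterm : ∀ j : {j // j ∈ R},
          (if h : j.1 ∈ R then
            G (fun k : {j // j ∈ R} => if (⟨j.1, h⟩ : {j // j ∈ R}) = k then 1 else 0) * x j.1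
           else 0)
          = x j.1 • G (fun k : {j // j ∈ R} => if j = k then 1 else 0) := by
        intro j
        rw [dif_pos j.2, smul_eq_mul, mul_comm]
      rw [Finset.sum_congr rfl (fun j _ => hterm j)]
      have hpi := LinearMap.pi_apply_eq_sum_univ G (fun j : {j // j ∈ R} => x j.1)
      rw [Finset.univ_eq_attach] at hpi
      rw [← hpi, hGeval x hx]
      simp
    · simp
    · intro j hj
      simp only [Function.mem_support] at hj
      by_cases hji : j = i
      · subst hji; exact Finset.mem_coe.mpr hiS'
      · by_cases h : j ∈ R
        · exact Finset.mem_coe.mpr (Finset.mem_insert_of_mem h)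
        · exfalso; apply hj; rw [dif_neg hji, dif_neg h]
  · -- exists w → recovery
    rintro ⟨w, hw, hwi, hsupp⟩
    have hP : ∀ x ∈ C, (∀ j ∈ R, x j = 0) → x i = 0 := by
      intro x hx hx0
      have hsum := hw x hx
      have : ∑ j, w j * x j = w i * x i := by
        refine Finset.sum_eq_single_of_mem i (Finset.mem_univ i) ?_
        intro j _ hji
        by_cases hwj : w j = 0
        · rw [hwj, zero_mul]
        · have : j ∈ S' := Finset.mem_coe.mp (hsupp hwj)
          rcases Finset.mem_insert.mp this with h | h
          · exact absurd h hji
          · rw [hx0 j h, mul_zero]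
      rw [this] at hsum
      exact (mul_eq_zero.mp hsum).resolve_left hwi
    apply key.mpr
    rw [← LinearMap.ker_eq_bot, LinearMap.ker_eq_bot']
    intro m hm0
    obtain ⟨x, hx, hxm⟩ := m.2
    have hx0 : ∀ j ∈ R, x j = 0 := by
      intro j hj
      have h2 : (projMap F S' x) ⟨j, Finset.mem_insert_of_mem hj⟩ = 0 := by
        rw [hxm]
        exact congrFun hm0 ⟨j, hj⟩
      exact h2
    have hxi : x i = 0 := hP x hx hx0
    apply Subtype.ext
    funext k
    rcases Finset.mem_insert.mp k.2 with h | h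
    · show (m : {j // j ∈ S'} → F) k = 0
      rw [← hxm]
      show x k.1 = 0
      rw [show k.1 = i from h]; exact hxi
    · show (m : {j // j ∈ S'} → F) k = 0
      rw [← hxm]
      exact hx0 k.1 h

/-- Let `C` be a linear code of length `n` over the finite field `F_q`, `i ∈ {1,…,n}` and
`R ⊆ {1,…,n}` with `i ∉ R`. Then `R` is a minimal recovery set for coordinate `i` (a recovery
set none of whose proper subsets is a recovery set for `i`) if and only if there exists a
minimal codeword `w ∈ C⊥` such that `supp(w) = R ∪ {i}`. -/
theorem minimal_recovery_set_iff_minimal_dual_word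
    {F : Type*} [Field F] [Fintype F] {n : ℕ}
    (C : Submodule F (Fin n → F))
    (i : Fin n) (R : Finset (Fin n)) (hiR : i ∉ R) :
    (IsRecoverySet F C i R ∧ ∀ R' : Finset (Fin n), R' ⊂ R → ¬ IsRecoverySet F C i R') ↔
      ∃ w : Fin n → F, MemDual C w ∧
        (∀ v : Fin n → F, MemDual C v → v ≠ 0 →
          Function.support v ⊆ Function.support w →
          Function.support v = Function.support w) ∧
        Function.support w = (insert i R : Finset (Fin n)) := by
  classical
  constructor
  · rintro ⟨hrec, hmin⟩
    obtain ⟨w, hw, hwi, hsupp⟩ := (recovery_iff_exists C i R hiR).mp hrec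
    have hsuppeq : Function.support w = ↑(insert i R) := by
      by_contra hne
      obtain ⟨j, hjmem, hjns⟩ := Set.exists_of_ssubset (hsupp.ssubset_of_ne hne)
      have hji : j ≠ i := fun h => hjns (h ▸ Function.mem_support.mpr hwi)
      have hjR : j ∈ R := by
        rcases Finset.mem_insert.mp (Finset.mem_coe.mp hjmem) with h | h
        · exact absurd h hji
        · exact h
      refine hmin (R.erase j) (Finset.erase_ssubset hjR) ?_
      refine (recovery_iff_exists C i (R.erase j)
        (fun h => hiR (Finset.mem_of_mem_erase h))).mpr ⟨w, hw, hwi, ?_⟩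
      intro k hk
      have hk' := Finset.mem_coe.mp (hsupp hk)
      rcases Finset.mem_insert.mp hk' with h | h
      · exact Finset.mem_coe.mpr (by rw [h]; exact Finset.mem_insert_self i _)
      · refine Finset.mem_coe.mpr (Finset.mem_insert_of_mem (Finset.mem_erase.mpr ⟨?_, h⟩))
        exact fun hkj => hjns (hkj ▸ hk)
    refine ⟨w, hw, ?_, hsuppeq⟩
    intro v hv hv0 hvsub
    by_contra hvne
    by_cases hvi : v i = 0
    · -- v vanishes at i: combine w and v to kill a coordinate of R
      obtain ⟨k, hk⟩ := Function.ne_iff.mp hv0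
      have hki : k ≠ i := fun h => hk (h ▸ hvi)
      have hkw : k ∈ Function.support w := hvsub (Function.mem_support.mpr hk)
      have hkR : k ∈ R := by
        rcases Finset.mem_insert.mp (Finset.mem_coe.mp (hsuppeq ▸ hkw)) with h | h
        · exact absurd h hki
        · exact h
      set w' : Fin n → F := w - (w k / v k) • v with hw'def
      have hw' : MemDual C w' := by
        intro x hx
        have h1 := hw x hx
        have h2 := hv x hx
        have : ∑ j, w' j * x j
            = (∑ j, w j * x j) - (w k / v k) * ∑ j, v j * x j := by
          rw [Finset.mul_sum, ← Finset.sum_sub_distrib]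
          refine Finset.sum_congr rfl fun j _ => by
            simp [hw'def, sub_mul, mul_assoc]
        rw [this, h1, h2, mul_zero, sub_zero]
      have hw'i : w' i ≠ 0 := by
        have : w' i = w i := by simp [hw'def, hvi]
        rw [this]; exact hwi
      have hw'k : w' k = 0 := by
        simp only [hw'def, Pi.sub_apply, Pi.smul_apply, smul_eq_mul]
        rw [div_mul_cancel₀ _ hk, sub_self]
      refine hmin (R.erase k) (Finset.erase_ssubset hkR) ?_
      refine (recovery_iff_exists C i (R.erase k)
        (fun h => hiR (Finset.mem_of_mem_erase h))).mpr ⟨w', hw', hw'i, ?_⟩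
      intro j hj
      have hjw : j ∈ Function.support w := by
        by_contra hjw
        apply hj
        have hjv : j ∉ Function.support v := fun h => hjw (hvsub h)
        simp only [Function.mem_support, not_not] at hjw hjv
        simp [hw'def, hjw, hjv]
      have hjk : j ≠ k := fun h => (h ▸ hj) hw'k
      rcases Finset.mem_insert.mp (Finset.mem_coe.mp (hsuppeq ▸ hjw)) with h | h
      · exact Finset.mem_coe.mpr (by rw [h]; exact Finset.mem_insert_self i _)
      · exact Finset.mem_coe.mpr (Finset.mem_insert_of_mem (Finset.mem_erase.mpr ⟨hjk, h⟩))
    · -- v i ≠ 0 : v itself witnesses a smaller recovery set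
      obtain ⟨j, hjw, hjv⟩ := Set.exists_of_ssubset (hvsub.ssubset_of_ne hvne)
      have hji : j ≠ i := fun h => hjv (h ▸ Function.mem_support.mpr hvi)
      have hjR : j ∈ R := by
        rcases Finset.mem_insert.mp (Finset.mem_coe.mp (hsuppeq ▸ hjw)) with h | h
        · exact absurd h hji
        · exact h
      refine hmin (R.erase j) (Finset.erase_ssubset hjR) ?_
      refine (recovery_iff_exists C i (R.erase j)
        (fun h => hiR (Finset.mem_of_mem_erase h))).mpr ⟨v, hv, hvi, ?_⟩
      intro k hk
      have hkw := hvsub hk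
      rcases Finset.mem_insert.mp (Finset.mem_coe.mp (hsuppeq ▸ hkw)) with h | h
      · exact Finset.mem_coe.mpr (by rw [h]; exact Finset.mem_insert_self i _)
      · refine Finset.mem_coe.mpr (Finset.mem_insert_of_mem (Finset.mem_erase.mpr ⟨?_, h⟩))
        exact fun hkj => hjv (hkj ▸ hk)
  · rintro ⟨w, hw, hminw, hsupp⟩
    have hwi : w i ≠ 0 := by
      have : i ∈ Function.support w := by
        rw [hsupp]; exact Finset.mem_coe.mpr (Finset.mem_insert_self i R)
      exact Function.mem_support.mp this
    refine ⟨(recovery_iff_exists C i R hiR).mpr ⟨w, hw, hwi, hsupp.le⟩, ?_⟩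
    intro R' hR' hrec'
    obtain ⟨v, hv, hvi, hvsupp⟩ := (recovery_iff_exists C i R' hrec'.1).mp hrec'
    have hv0 : v ≠ 0 := fun h => hvi (by rw [h]; rfl)
    have hsub : Function.support v ⊆ Function.support w := by
      rw [hsupp]
      intro k hk
      rcases Finset.mem_insert.mp (Finset.mem_coe.mp (hvsupp hk)) with h | h
      · exact Finset.mem_coe.mpr (by rw [h]; exact Finset.mem_insert_self i _)
      · exact Finset.mem_coe.mpr (Finset.mem_insert_of_mem (hR'.1 h))
    have heq := hminw v hv hv0 hsub
    obtain ⟨j, hjR, hjR'⟩ := Finset.exists_of_ssubset hR'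
    have hj1 : j ∈ Function.support v := by
      rw [heq, hsupp]
      exact Finset.mem_coe.mpr (Finset.mem_insert_of_mem hjR)
    rcases Finset.mem_insert.mp (Finset.mem_coe.mp (hvsupp hj1)) with h | h
    · exact hiR (h ▸ hjR)
    · exact hjR' h
end

section
/- Let C be a linear code of length n over the finite field F_q whose dual C⊥ is nonzero, and let d(C⊥) denote the minimum distance of C⊥. If R is a recovery set for a coordinate i ∈ {1,…,n}, then #R ≥ d(C⊥) − 1. Consequently the locality of C satisfies loc(C) ≥ d(C⊥) − 1. -/
/-- The Hamming weight of a vector: the number of nonzero coordinates. -/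
def wt {F : Type*} [Zero F] [DecidableEq F] {n : ℕ} (x : Fin n → F) : ℕ :=
  (Finset.univ.filter fun j => x j ≠ 0).card

/-- If `R` is a recovery set for `i`, coordinate `i` vanishes whenever all of `R` vanishes. -/
lemma recovery_coord_zero {F : Type*} [Field F] {n : ℕ}
    (C : Submodule F (Fin n → F)) (i : Fin n) (R : Finset (Fin n))
    (h : IsRecoverySet F C i R) :
    ∀ x ∈ C, (∀ j ∈ R, x j = 0) → x i = 0 := by
  obtain ⟨hiR, hdim⟩ := h
  set ρ : ({j // j ∈ insert i R} → F) →ₗ[F] ({j // j ∈ R} → F) :=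
    LinearMap.funLeft F F (fun j => ⟨j.1, Finset.mem_insert_of_mem j.2⟩) with hρ
  have hcomp : projMap F R = ρ.comp (projMap F (insert i R)) := rfl
  set A := C.map (projMap F (insert i R)) with hA
  set f : A →ₗ[F] ({j // j ∈ R} → F) := ρ.domRestrict A with hf
  have hrange : LinearMap.range f = C.map (projMap F R) := by
    rw [hcomp, Submodule.map_comp]
    exact LinearMap.range_domRestrict A ρ
  have hker : LinearMap.ker f = ⊥ := by
    have h1 := LinearMap.finrank_range_add_finrank_ker f
    have h2 : Module.finrank F (LinearMap.range f) = Module.finrank F A := by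
      rw [hrange]; exact hdim
    rw [h2] at h1
    have h3 : Module.finrank F (LinearMap.ker f) = 0 := by omega
    exact Submodule.finrank_eq_zero.mp h3
  intro x hx hxR
  have hy : projMap F (insert i R) x ∈ A := Submodule.mem_map_of_mem hx
  have hfz : f ⟨projMap F (insert i R) x, hy⟩ = 0 := by
    funext j
    exact hxR j.1 j.2
  have : (⟨projMap F (insert i R) x, hy⟩ : A) ∈ LinearMap.ker f := hfz
  rw [hker, Submodule.mem_bot] at this
  have hz : projMap F (insert i R) x = 0 := congrArg Subtype.val this
  exact congrFun hz ⟨i, Finset.mem_insert_self i R⟩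

/-- If `R` is a recovery set for `i`, there is a dual codeword supported in `insert i R`
with value `-1` at `i`. -/
lemma recovery_dual_word {F : Type*} [Field F] {n : ℕ}
    (C : Submodule F (Fin n → F)) (i : Fin n) (R : Finset (Fin n))
    (h : IsRecoverySet F C i R) :
    ∃ w : Fin n → F, (∀ x ∈ C, ∑ j, w j * x j = 0) ∧ w i = -1 ∧
      ∀ j, j ∉ insert i R → w j = 0 := by
  classical
  set φ : C →ₗ[F] ({j // j ∈ R} → F) := (projMap F R).comp C.subtype with hφ
  set ψ : C →ₗ[F] F := (LinearMap.proj i).comp C.subtype with hψ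
  have hkk : LinearMap.ker φ ≤ LinearMap.ker ψ := by
    intro x hxk
    have hxR : ∀ j ∈ R, (x : Fin n → F) j = 0 := by
      intro j hj
      have := congrFun (LinearMap.mem_ker.mp hxk) ⟨j, hj⟩
      exact this
    exact recovery_coord_zero C i R h x x.2 hxR
  -- factor ψ through φ
  set e : (C ⧸ LinearMap.ker φ) →ₗ[F] ({j // j ∈ R} → F) :=
    (LinearMap.ker φ).liftQ φ le_rfl with he
  have he_inj : LinearMap.ker e = ⊥ := Submodule.ker_liftQ_eq_bot _ _ _ le_rfl
  obtain ⟨l, hl⟩ := e.exists_leftInverse_of_injective he_inj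
  set g : ({j // j ∈ R} → F) →ₗ[F] F :=
    ((LinearMap.ker φ).liftQ ψ hkk).comp l with hg
  have hfact : ∀ x : C, g (φ x) = ψ x := by
    intro x
    have h1 : φ x = e ((LinearMap.ker φ).mkQ x) := rfl
    have h2 : l (e ((LinearMap.ker φ).mkQ x)) = (LinearMap.ker φ).mkQ x := by
      have := congrFun (congrArg DFunLike.coe hl) ((LinearMap.ker φ).mkQ x)
      simpa using this
    rw [hg]
    simp only [LinearMap.comp_apply]
    rw [h1, h2]
    rfl
  set a : {j // j ∈ R} → F := fun j => g (fun k => if j = k then 1 else 0) with ha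
  refine ⟨fun j => if j = i then -1 else if hj : j ∈ R then a ⟨j, hj⟩ else 0, ?_, by simp, ?_⟩
  · intro x hx
    have hsub : ∀ j ∈ Finset.univ, j ∉ insert i R →
        (if j = i then (-1 : F) else if hj : j ∈ R then a ⟨j, hj⟩ else 0) * x j = 0 := by
      intro j _ hj
      have hji : j ≠ i := fun hh => hj (hh ▸ Finset.mem_insert_self i R)
      have hjR : j ∉ R := fun hh => hj (Finset.mem_insert_of_mem hh)
      simp [hji, hjR]
    rw [← Finset.sum_subset (Finset.subset_univ (insert i R)) hsub,
      Finset.sum_insert h.1]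
    have hRsum : ∑ j ∈ R, (if j = i then (-1 : F) else if hj : j ∈ R then a ⟨j, hj⟩ else 0) * x j
        = ∑ j : {j // j ∈ R}, a j * x j.1 := by
      rw [← Finset.sum_attach R (fun j => (if j = i then (-1 : F) else if hj : j ∈ R then a ⟨j, hj⟩ else 0) * x j)]
      refine Finset.sum_congr rfl ?_
      intro j _
      have hji : j.1 ≠ i := fun hh => h.1 (hh ▸ j.2)
      simp [hji, j.2]
    rw [hRsum]
    have hgφ : g (φ ⟨x, hx⟩) = x i := hfact ⟨x, hx⟩
    have hsum : g (φ ⟨x, hx⟩) = ∑ j : {j // j ∈ R}, a j * x j.1 := by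
      rw [LinearMap.pi_apply_eq_sum_univ g (φ ⟨x, hx⟩)]
      refine Finset.sum_congr rfl ?_
      intro j _
      rw [smul_eq_mul, mul_comm]
      rfl
    rw [← hsum, hgφ]
    simp
  · intro j hj
    have hji : j ≠ i := fun hh => hj (hh ▸ Finset.mem_insert_self i R)
    have hjR : j ∉ R := fun hh => hj (Finset.mem_insert_of_mem hh)
    simp [hji, hjR]

/-- Let `C` be a linear code of length `n` over the finite field `F_q` whose dual `C⊥` is
nonzero, and let `d` be the minimum distance of `C⊥`. If `R` is a recovery set for a coordinate
`i`, then `#R ≥ d(C⊥) − 1`. Consequently the locality of `C` satisfies `loc(C) ≥ d(C⊥) − 1`: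
any `r` such that every coordinate has a recovery set of cardinality at most `r` satisfies
`r ≥ d(C⊥) − 1`. -/
theorem recovery_set_card_ge_dual_distance
    {F : Type*} [Field F] [Fintype F] [DecidableEq F] {n : ℕ}
    (C : Submodule F (Fin n → F)) (d : ℕ)
    (hd_ex : ∃ w : Fin n → F, (∀ x ∈ C, ∑ j, w j * x j = 0) ∧ w ≠ 0 ∧ wt w = d)
    (hd_min : ∀ w : Fin n → F, (∀ x ∈ C, ∑ j, w j * x j = 0) → w ≠ 0 → d ≤ wt w) :
    (∀ (i : Fin n) (R : Finset (Fin n)), IsRecoverySet F C i R → d - 1 ≤ R.card) ∧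
      ∀ r : ℕ, (∀ i : Fin n, ∃ R : Finset (Fin n), IsRecoverySet F C i R ∧ R.card ≤ r) →
        d - 1 ≤ r := by
  have main : ∀ (i : Fin n) (R : Finset (Fin n)), IsRecoverySet F C i R → d - 1 ≤ R.card := by
    intro i R hR
    obtain ⟨w, hdual, hwi, hsupp⟩ := recovery_dual_word C i R hR
    have hw0 : w ≠ 0 := by
      intro hh
      have h0 : (-1 : F) = 0 := by rw [← hwi, hh]; rfl
      simp at h0
    have hd : d ≤ wt w := hd_min w hdual hw0
    have hwt : wt w ≤ R.card + 1 := by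
      have hss : (Finset.univ.filter fun j => w j ≠ 0) ⊆ insert i R := by
        intro j hj
        rw [Finset.mem_filter] at hj
        by_contra hc
        exact hj.2 (hsupp j hc)
      calc wt w ≤ (insert i R).card := Finset.card_le_card hss
        _ ≤ R.card + 1 := Finset.card_insert_le i R
    omega
  refine ⟨main, ?_⟩
  intro r hr
  obtain ⟨w, _, hw0, _⟩ := hd_ex
  obtain ⟨j, hj⟩ := Function.ne_iff.mp hw0
  obtain ⟨R, hRrec, hRcard⟩ := hr j
  exact le_trans (main j R hRrec) hRcard
end

section
/- Let C be a linear code of length n over the finite field F_q and let i ∈ {1,…,n} be a coordinate that admits a recovery set. Then loc_i(C) = min{ wt(w) − 1 : w ∈ C⊥, i ∈ supp(w) }, i.e. the minimum cardinality of a recovery set for coordinate i equals one less than the minimum weight of a dual codeword whose support contains i. -/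
/-- `loc_i(C)`: the minimum cardinality of a recovery set for coordinate `i` of `C`. -/
noncomputable def loci (F : Type*) [Field F] {n : ℕ}
    (C : Submodule F (Fin n → F)) (i : Fin n) : ℕ :=
  sInf {c : ℕ | ∃ R : Finset (Fin n), IsRecoverySet F C i R ∧ R.card = c}

def restrictMap (F : Type*) [Field F] {n : ℕ} {R S : Finset (Fin n)} (h : R ⊆ S) :
    ({j // j ∈ S} → F) →ₗ[F] ({j // j ∈ R} → F) :=
  LinearMap.funLeft F F fun j => ⟨j.1, h j.2⟩

section

variable {F : Type*} [Field F] {n : ℕ}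

theorem projMap_eq_restrictMap_comp {R S : Finset (Fin n)} (h : R ⊆ S) :
    projMap F R = (restrictMap F h).comp (projMap F S) :=
  rfl

theorem projMap_eq_zero_iff {S : Finset (Fin n)} {x : Fin n → F} :
    projMap F S x = 0 ↔ ∀ j ∈ S, x j = 0 := by
  simp [funext_iff, projMap, LinearMap.funLeft]

theorem projDim_eq_projDim_iff (C : Submodule F (Fin n → F)) {R S : Finset (Fin n)}
    (h : R ⊆ S) :
    projDim F C R = projDim F C S ↔ ∀ x ∈ C, (∀ j ∈ R, x j = 0) → ∀ j ∈ S, x j = 0 := by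
  set ρ := (restrictMap F h).domRestrict (C.map (projMap F S))
  have hrank : projDim F C R + Module.finrank F (LinearMap.ker ρ) = projDim F C S := by
    rw [projDim, projDim, ← LinearMap.finrank_range_add_finrank_ker ρ,
      LinearMap.range_domRestrict, ← Submodule.map_comp, ← projMap_eq_restrictMap_comp]
  have hker : LinearMap.ker ρ = ⊥ ↔
      ∀ x ∈ C, (∀ j ∈ R, x j = 0) → ∀ j ∈ S, x j = 0 := by
    simp only [LinearMap.ker_eq_bot', Subtype.forall, Submodule.mem_map, forall_exists_index,
      ← projMap_eq_zero_iff]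
    constructor
    · intro hinj x hx hxR
      exact congrArg Subtype.val (hinj _ x ⟨hx, rfl⟩ hxR)
    · rintro hinj _ x ⟨hx, rfl⟩ hxR
      exact Subtype.ext (hinj x hx hxR)
  rw [← hker, ← Submodule.finrank_eq_zero]
  omega

theorem isRecoverySet_iff (C : Submodule F (Fin n → F)) (i : Fin n) (R : Finset (Fin n)) :
    IsRecoverySet F C i R ↔ i ∉ R ∧ ∀ x ∈ C, (∀ j ∈ R, x j = 0) → x i = 0 := by
  rw [IsRecoverySet, projDim_eq_projDim_iff C (Finset.subset_insert i R)]
  simp only [Finset.mem_insert, forall_eq_or_imp]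
  grind

/-- The hypothesis says exactly that `e_i ∉ C + K`, where `K` is the space of vectors vanishing
on `R ∪ {i}`; a linear form killing `C + K` but not `e_i` is `x ↦ ∑ j, w j * x j` for the
required `w`. -/
theorem exists_dual_codeword_of_forall_vanish (C : Submodule F (Fin n → F)) {i : Fin n}
    {R : Finset (Fin n)} (hi : i ∉ R) (h : ∀ x ∈ C, (∀ j ∈ R, x j = 0) → x i = 0) :
    ∃ w : Fin n → F, (∀ x ∈ C, ∑ j, w j * x j = 0) ∧ w i ≠ 0 ∧
      ∀ j, w j ≠ 0 → j ∈ insert i R := by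
  set K : Submodule F (Fin n → F) := Submodule.pi (insert i R : Finset (Fin n)) fun _ => ⊥
  have hmemK {k : Fin n → F} : k ∈ K ↔ ∀ j ∈ insert i R, k j = 0 := by
    simp [K, Submodule.mem_pi]
  have hnotMem : (Pi.single i 1 : Fin n → F) ∉ C ⊔ K := by
    rw [Submodule.mem_sup]
    rintro ⟨c, hc, k, hk, hck⟩
    rw [hmemK] at hk
    have hc_eq : c = Pi.single i 1 - k := eq_sub_of_add_eq hck
    have hci : c i = 0 := h c hc fun j hj => by
      have hji : j ≠ i := fun hji => hi (hji ▸ hj)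
      simp [hc_eq, hji, hk j (Finset.mem_insert_of_mem hj)]
    simp [hc_eq, hk i (Finset.mem_insert_self i R)] at hci
  obtain ⟨φ, hφi, hφ⟩ := Submodule.exists_le_ker_of_notMem hnotMem
  refine ⟨fun j => φ (Pi.single j 1), fun x hx => ?_, hφi, fun j hj => ?_⟩
  · have hφx : φ x = 0 := hφ (Submodule.mem_sup_left hx)
    have hsingle (j : Fin n) : (fun k => if j = k then (1 : F) else 0) = Pi.single j 1 :=
      funext fun k => by simp [Pi.single_apply, eq_comm]
    simpa [LinearMap.pi_apply_eq_sum_univ φ x, hsingle, mul_comm] using hφx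
  · by_contra hjS
    refine hj (hφ (Submodule.mem_sup_right (hmemK.2 fun k hk => ?_)))
    simp [show k ≠ j by rintro rfl; exact hjS hk]

theorem forall_vanish_of_dual_codeword [DecidableEq F] (C : Submodule F (Fin n → F))
    {i : Fin n} {w : Fin n → F} (hw : ∀ x ∈ C, ∑ j, w j * x j = 0) (hwi : w i ≠ 0) :
    ∀ x ∈ C, (∀ j ∈ (Finset.univ.filter fun j => w j ≠ 0).erase i, x j = 0) → x i = 0 := by
  intro x hx hvanish
  have hsum : ∑ j, w j * x j = w i * x i := by
    refine Finset.sum_eq_single i (fun j _ hji => ?_) (by simp)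
    by_cases hwj : w j = 0
    · rw [hwj, zero_mul]
    · rw [hvanish j (by simp [hji, hwj]), mul_zero]
  exact (mul_eq_zero.mp (hsum ▸ hw x hx)).resolve_left hwi

end

theorem loci_eq_min_dual_weight_general
    {F : Type*} [Field F] [DecidableEq F] {n : ℕ}
    (C : Submodule F (Fin n → F)) (i : Fin n) :
    loci F C i =
      sInf {c : ℕ | ∃ w : Fin n → F,
        (∀ x ∈ C, ∑ j, w j * x j = 0) ∧ w i ≠ 0 ∧ wt w - 1 = c} := by
  apply csInf_eq_csInf_of_forall_exists_le
  · rintro _ ⟨R, hR, rfl⟩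
    obtain ⟨hi, hvanish⟩ := (isRecoverySet_iff C i R).1 hR
    obtain ⟨w, hw, hwi, hsupp⟩ := exists_dual_codeword_of_forall_vanish C hi hvanish
    have hwt : wt w ≤ R.card + 1 := by
      rw [← Finset.card_insert_of_notMem hi]
      exact Finset.card_le_card fun j hj => hsupp j (Finset.mem_filter.1 hj).2
    exact ⟨_, ⟨w, hw, hwi, rfl⟩, by omega⟩
  · rintro _ ⟨w, hw, hwi, rfl⟩
    have hR := (isRecoverySet_iff C i _).2
      ⟨Finset.notMem_erase i _, forall_vanish_of_dual_codeword C hw hwi⟩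
    refine ⟨_, ⟨_, hR, rfl⟩, ?_⟩
    rw [Finset.card_erase_of_mem (by simpa using hwi)]
    rfl

/-- Let `C` be a linear code of length `n` over the finite field `F_q` and let `i` be a
coordinate admitting a recovery set. Then `loc_i(C) = min { wt(w) − 1 : w ∈ C⊥, i ∈ supp(w) }`:
the minimum cardinality of a recovery set for `i` equals one less than the minimum weight of a
dual codeword whose support contains `i`. -/
theorem loci_eq_min_dual_weight
    {F : Type*} [Field F] [Fintype F] [DecidableEq F] {n : ℕ}
    (C : Submodule F (Fin n → F)) (i : Fin n)
    (hrec : ∃ R : Finset (Fin n), IsRecoverySet F C i R) :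
    loci F C i =
      sInf {c : ℕ | ∃ w : Fin n → F,
        (∀ x ∈ C, ∑ j, w j * x j = 0) ∧ w i ≠ 0 ∧ wt w - 1 = c} :=
  loci_eq_min_dual_weight_general C i
end

section
/- Let C be a linear code of length n over the finite field F_q with minimum distance d(C) > 1 and with C⊥ ≠ 0. Then every coordinate admits a recovery set, and the dual distance satisfies d(C⊥) = min_{1≤i≤n} loc_i(C) + 1, i.e. the minimum distance of C⊥ equals one plus the smallest locality of a coordinate of C. -/
section Aux

variable {F : Type*} [Field F] {n : ℕ}

lemma restrict_comp (R S : Finset (Fin n)) (h : R ⊆ S) :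
    (LinearMap.funLeft F F (fun j : {j // j ∈ R} => (⟨j.1, h j.2⟩ : {j // j ∈ S}))).comp
      (projMap F S) = projMap F R := rfl

/-- If coordinates in `R` determine coordinate `i` on `C`, then `projDim` doesn't grow. -/
lemma projDim_insert_eq (C : Submodule F (Fin n → F)) (i : Fin n) (R : Finset (Fin n))
    (hinj : ∀ x ∈ C, (∀ j ∈ R, x j = 0) → x i = 0) :
    projDim F C R = projDim F C (insert i R) := by
  classical
  set S : Finset (Fin n) := insert i R with hS
  have hRS : R ⊆ S := Finset.subset_insert i R
  set f : ({j // j ∈ S} → F) →ₗ[F] ({j // j ∈ R} → F) :=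
    LinearMap.funLeft F F (fun j : {j // j ∈ R} => (⟨j.1, hRS j.2⟩ : {j // j ∈ S})) with hf
  set P : Submodule F ({j // j ∈ S} → F) := C.map (projMap F S) with hP
  have hQ : C.map (projMap F R) = P.map f := by
    rw [hP, ← Submodule.map_comp, restrict_comp R S hRS]
  set g : P →ₗ[F] ({j // j ∈ R} → F) := f.comp P.subtype with hg
  have hrange : LinearMap.range g = P.map f := by
    rw [hg, LinearMap.range_comp, Submodule.range_subtype]
  have hker : LinearMap.ker g = ⊥ := by
    rw [eq_bot_iff]
    rintro ⟨y, hy⟩ hy0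
    obtain ⟨x, hxC, hxy⟩ := hy
    have hy0' : f y = 0 := hy0
    have hzero : ∀ j ∈ R, x j = 0 := by
      intro j hj
      have := congrFun hy0' ⟨j, hj⟩
      rw [← hxy] at this
      exact this
    have hxi : x i = 0 := hinj x hxC hzero
    have : y = 0 := by
      rw [← hxy]
      funext s
      rcases Finset.mem_insert.mp s.2 with h1 | h2
      · show x s.1 = 0
        rw [h1]; exact hxi
      · exact hzero s.1 h2
    exact Submodule.mem_bot F |>.mpr (Subtype.ext this)
  have hrank := LinearMap.finrank_range_add_finrank_ker g
  rw [hker, finrank_bot, add_zero, hrange] at hrank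
  show Module.finrank F (C.map (projMap F R)) = Module.finrank F P
  rw [hQ, hrank]

/-- From a dual codeword nonzero at `i`, get a recovery set for `i`. -/
lemma recovery_of_dual [DecidableEq F] (C : Submodule F (Fin n → F))
    (w : Fin n → F) (hw : ∀ x ∈ C, ∑ j, w j * x j = 0) (i : Fin n) (hwi : w i ≠ 0) :
    IsRecoverySet F C i ((Finset.univ.filter fun j => w j ≠ 0).erase i) ∧
      ((Finset.univ.filter fun j => w j ≠ 0).erase i).card = wt w - 1 := by
  classical
  set R := (Finset.univ.filter fun j => w j ≠ 0).erase i with hR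
  have hiR : i ∉ R := Finset.notMem_erase i _
  refine ⟨⟨hiR, ?_⟩, ?_⟩
  · apply projDim_insert_eq
    intro x hx h0
    have hsum := hw x hx
    have : ∑ j, w j * x j = w i * x i := by
      apply Finset.sum_eq_single i
      · intro j _ hji
        by_cases hwj : w j = 0
        · rw [hwj, zero_mul]
        · have : j ∈ R := Finset.mem_erase.mpr ⟨hji, Finset.mem_filter.mpr ⟨Finset.mem_univ _, hwj⟩⟩
          rw [h0 j this, mul_zero]
      · intro h; exact absurd (Finset.mem_univ i) h
    rw [this] at hsum
    exact (mul_eq_zero.mp hsum).resolve_left hwi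
  · have hmem : i ∈ Finset.univ.filter fun j => w j ≠ 0 :=
      Finset.mem_filter.mpr ⟨Finset.mem_univ _, hwi⟩
    rw [Finset.card_erase_of_mem hmem]
    rfl

/-- From a recovery set for `i`, get a dual codeword nonzero at `i` supported in `insert i R`. -/
lemma dual_of_recovery [DecidableEq F] (C : Submodule F (Fin n → F)) (i : Fin n)
    (R : Finset (Fin n)) (hR : IsRecoverySet F C i R) :
    ∃ w : Fin n → F, (∀ x ∈ C, ∑ j, w j * x j = 0) ∧ w i ≠ 0 ∧
      ∀ j, w j ≠ 0 → j ∈ insert i R := by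
  classical
  obtain ⟨hiR, hdim⟩ := hR
  -- first derive the determination property
  have hinj : ∀ x ∈ C, (∀ j ∈ R, x j = 0) → x i = 0 := by
    set S : Finset (Fin n) := insert i R with hS
    have hRS : R ⊆ S := Finset.subset_insert i R
    set f : ({j // j ∈ S} → F) →ₗ[F] ({j // j ∈ R} → F) :=
      LinearMap.funLeft F F (fun j : {j // j ∈ R} => (⟨j.1, hRS j.2⟩ : {j // j ∈ S})) with hf
    set P : Submodule F ({j // j ∈ S} → F) := C.map (projMap F S) with hP
    have hQ : C.map (projMap F R) = P.map f := by
      rw [hP, ← Submodule.map_comp, restrict_comp R S hRS]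
    set g : P →ₗ[F] ({j // j ∈ R} → F) := f.comp P.subtype with hg
    have hrange : LinearMap.range g = P.map f := by
      rw [hg, LinearMap.range_comp, Submodule.range_subtype]
    have hrank := LinearMap.finrank_range_add_finrank_ker g
    rw [hrange, ← hQ] at hrank
    have hdim' : Module.finrank F (C.map (projMap F R)) = Module.finrank F P := hdim
    rw [hdim'] at hrank
    have hker0 : Module.finrank F (LinearMap.ker g) = 0 := by omega
    have hker : LinearMap.ker g = ⊥ := Submodule.finrank_eq_zero.mp hker0
    intro x hx h0
    have hmem : projMap F S x ∈ P := Submodule.mem_map_of_mem hx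
    have hgz : g ⟨projMap F S x, hmem⟩ = 0 := by
      funext r
      exact h0 r.1 r.2
    have : (⟨projMap F S x, hmem⟩ : P) = 0 := by
      have hmk := LinearMap.mem_ker.mpr hgz
      rw [hker, Submodule.mem_bot] at hmk
      exact hmk
    have hz : projMap F S x = 0 := congrArg Subtype.val this
    exact congrFun hz ⟨i, Finset.mem_insert_self i R⟩
  -- factor the functional x ↦ x i through the projection to R
  set π : C →ₗ[F] ({j // j ∈ R} → F) := (projMap F R).comp C.subtype with hπ
  set ψ : C →ₗ[F] F := (LinearMap.proj i).comp C.subtype with hψ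
  have hle : LinearMap.ker π ≤ LinearMap.ker ψ := by
    intro x hxk
    have h0 : ∀ j ∈ R, (x : Fin n → F) j = 0 := by
      intro j hj
      exact congrFun (LinearMap.mem_ker.mp hxk) ⟨j, hj⟩
    exact LinearMap.mem_ker.mpr (hinj x.1 x.2 h0)
  set ψQ : (C ⧸ LinearMap.ker π) →ₗ[F] F := (LinearMap.ker π).liftQ ψ hle with hψQ
  set e := π.quotKerEquivRange with he
  obtain ⟨g0, hg0⟩ := (ψQ.comp (e.symm : LinearMap.range π →ₗ[F] (C ⧸ LinearMap.ker π))).exists_extend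
  have key : ∀ x : C, g0 (π x) = (x : Fin n → F) i := by
    intro x
    have h1 : e (Submodule.Quotient.mk x) = ⟨π x, LinearMap.mem_range_self π x⟩ := by
      apply Subtype.ext
      exact π.quotKerEquivRange_apply_mk x
    have h2 : e.symm ⟨π x, LinearMap.mem_range_self π x⟩ = Submodule.Quotient.mk x := by
      rw [← h1, LinearEquiv.symm_apply_apply]
    calc g0 (π x) = (g0.comp (LinearMap.range π).subtype) ⟨π x, LinearMap.mem_range_self π x⟩ := rfl
      _ = ψQ (e.symm ⟨π x, LinearMap.mem_range_self π x⟩) := by rw [hg0]; rfl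
      _ = ψQ (Submodule.Quotient.mk x) := by rw [h2]
      _ = ψ x := rfl
  -- build the dual word
  set w : Fin n → F := fun j =>
    if hj : j ∈ R then g0 (fun t : {j // j ∈ R} => if (⟨j, hj⟩ : {j // j ∈ R}) = t then 1 else 0)
    else if j = i then -1 else 0 with hwdef
  have hwi : w i = -1 := by
    simp [hwdef, hiR]
  have hsupp : ∀ j, w j ≠ 0 → j ∈ insert i R := by
    intro j hj
    by_cases h1 : j ∈ R
    · exact Finset.mem_insert_of_mem h1
    · by_cases h2 : j = i
      · rw [h2]; exact Finset.mem_insert_self i R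
      · exfalso; apply hj; rw [hwdef]; simp [h1, h2]
  refine ⟨w, ?_, by rw [hwi]; exact neg_ne_zero.mpr one_ne_zero, hsupp⟩
  intro x hx
  have hexp : g0 (π ⟨x, hx⟩) =
      ∑ s : {j // j ∈ R}, (x s.1) * g0 (fun t : {j // j ∈ R} => if s = t then 1 else 0) := by
    conv_lhs => rw [pi_eq_sum_univ (π ⟨x, hx⟩)]
    rw [map_sum]
    congr 1
    funext s
    rw [map_smul, smul_eq_mul]
    rfl
  have hsplit : ∑ j, w j * x j = ∑ j ∈ insert i R, w j * x j := by
    symm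
    apply Finset.sum_subset (Finset.subset_univ _)
    intro j _ hj
    by_cases hwj : w j = 0
    · rw [hwj, zero_mul]
    · exact absurd (hsupp j hwj) hj
  rw [hsplit, Finset.sum_insert hiR, hwi]
  have hRsum : ∑ j ∈ R, w j * x j = x i := by
    rw [← Finset.sum_attach R (fun j => w j * x j), ← Finset.univ_eq_attach]
    calc ∑ s : {j // j ∈ R}, w s.1 * x s.1
        = ∑ s : {j // j ∈ R}, (x s.1) * g0 (fun t : {j // j ∈ R} => if s = t then 1 else 0) := by
          congr 1
          funext s
          simp only [hwdef]
          rw [dif_pos s.2, mul_comm]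
      _ = g0 (π ⟨x, hx⟩) := hexp.symm
      _ = x i := key ⟨x, hx⟩
  rw [hRsum]
  ring

/-- Every coordinate admits a dual word that is nonzero there, thanks to `d(C) ≥ 2`. -/
lemma exists_dual_nonzero_at [DecidableEq F] (C : Submodule F (Fin n → F))
    (hd : ∀ x ∈ C, x ≠ 0 → 2 ≤ wt x) (i : Fin n) :
    ∃ w : Fin n → F, (∀ x ∈ C, ∑ j, w j * x j = 0) ∧ w i ≠ 0 := by
  classical
  have hei : (Pi.single i 1 : Fin n → F) ∉ C := by
    intro hmem
    have hne : (Pi.single i 1 : Fin n → F) ≠ 0 := by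
      intro h
      have := congrFun h i
      rw [Pi.single_eq_same] at this
      exact one_ne_zero this
    have h2 := hd _ hmem hne
    have : wt (Pi.single i 1 : Fin n → F) = 1 := by
      rw [wt]
      rw [show (Finset.univ.filter fun j => (Pi.single i 1 : Fin n → F) j ≠ 0) = {i} by
        ext j
        simp only [Finset.mem_filter, Finset.mem_univ, true_and, Finset.mem_singleton]
        constructor
        · intro hj
          by_contra hji
          exact hj (Pi.single_eq_of_ne hji 1)
        · intro hj; rw [hj, Pi.single_eq_same]; exact one_ne_zero]
      exact Finset.card_singleton i
    omega
  obtain ⟨f, hf1, hf2⟩ := Submodule.exists_dual_map_eq_bot_of_notMem hei inferInstance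
  refine ⟨fun j => f (Pi.single j 1), ?_, hf1⟩
  intro x hx
  have hfx : f x = 0 := by
    have : f x ∈ C.map f := Submodule.mem_map_of_mem hx
    rwa [hf2, Submodule.mem_bot] at this
  calc ∑ j, f (Pi.single j 1) * x j = ∑ j, f (Pi.single j (x j)) := by
        congr 1; funext j
        have hs : Pi.single j (x j) = x j • (Pi.single j 1 : Fin n → F) := by
          rw [← Pi.single_smul, smul_eq_mul, mul_one]
        rw [hs, map_smul, smul_eq_mul, mul_comm]
    _ = f (∑ j, Pi.single j (x j)) := (map_sum f _ _).symm
    _ = f x := by rw [Finset.univ_sum_single]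
    _ = 0 := hfx

end Aux

/-- Let `C` be a linear code of length `n` over the finite field `F_q` with minimum distance
`d(C) > 1` (every nonzero codeword has weight at least 2) and with nonzero dual `C⊥`, whose
minimum distance is `d`. Then every coordinate admits a recovery set, and
`d(C⊥) = min_i loc_i(C) + 1`. -/
theorem dual_distance_eq_min_loci_add_one
    {F : Type*} [Field F] [Fintype F] [DecidableEq F] {n : ℕ}
    (C : Submodule F (Fin n → F))
    (hd : ∀ x ∈ C, x ≠ 0 → 2 ≤ wt x)
    (d : ℕ)
    (hd_ex : ∃ w : Fin n → F, (∀ x ∈ C, ∑ j, w j * x j = 0) ∧ w ≠ 0 ∧ wt w = d)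
    (hd_min : ∀ w : Fin n → F, (∀ x ∈ C, ∑ j, w j * x j = 0) → w ≠ 0 → d ≤ wt w) :
    (∀ i : Fin n, ∃ R : Finset (Fin n), IsRecoverySet F C i R) ∧
      d = sInf (Set.range fun i : Fin n => loci F C i) + 1 := by
  classical
  have hrec : ∀ i : Fin n, ∃ R : Finset (Fin n), IsRecoverySet F C i R := by
    intro i
    obtain ⟨w, hw, hwi⟩ := exists_dual_nonzero_at C hd i
    exact ⟨_, (recovery_of_dual C w hw i hwi).1⟩
  refine ⟨hrec, ?_⟩
  -- d ≥ 1
  obtain ⟨w0, hw0d, hw0ne, hw0wt⟩ := hd_ex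
  have hd1 : 1 ≤ d := by
    rw [← hw0wt]
    obtain ⟨j, hj⟩ := Function.ne_iff.mp hw0ne
    have : j ∈ Finset.univ.filter fun j => w0 j ≠ 0 :=
      Finset.mem_filter.mpr ⟨Finset.mem_univ _, hj⟩
    exact Finset.card_pos.mpr ⟨j, this⟩
  -- every loci is at least d - 1
  have hloc_ge : ∀ i : Fin n, d ≤ loci F C i + 1 := by
    intro i
    have hne : {c : ℕ | ∃ R : Finset (Fin n), IsRecoverySet F C i R ∧ R.card = c}.Nonempty := by
      obtain ⟨R, hR⟩ := hrec i
      exact ⟨R.card, R, hR, rfl⟩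
    obtain ⟨R, hR, hRc⟩ := Nat.sInf_mem hne
    obtain ⟨w, hw, hwi, hsupp⟩ := dual_of_recovery C i R hR
    have hwne : w ≠ 0 := fun h => hwi (congrFun h i)
    have h1 := hd_min w hw hwne
    have h2 : wt w ≤ R.card + 1 := by
      rw [wt]
      calc (Finset.univ.filter fun j => w j ≠ 0).card ≤ (insert i R).card := by
            apply Finset.card_le_card
            intro j hj
            exact hsupp j (Finset.mem_filter.mp hj).2
        _ ≤ R.card + 1 := Finset.card_insert_le i R
    rw [loci, ← hRc]
    omega
  -- some loci is at most d - 1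
  obtain ⟨i0, hi0⟩ := Function.ne_iff.mp hw0ne
  have hloc_le : loci F C i0 + 1 ≤ d := by
    obtain ⟨hRS, hcard⟩ := recovery_of_dual C w0 hw0d i0 hi0
    have : loci F C i0 ≤ wt w0 - 1 := by
      apply Nat.sInf_le
      exact ⟨_, hRS, hcard⟩
    rw [hw0wt] at this
    omega
  -- conclude
  have hne : (Set.range fun i : Fin n => loci F C i).Nonempty := ⟨loci F C i0, i0, rfl⟩
  obtain ⟨i1, hi1⟩ := Nat.sInf_mem hne
  have h1 : sInf (Set.range fun i : Fin n => loci F C i) ≤ loci F C i0 :=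
    Nat.sInf_le ⟨i0, rfl⟩
  have h2 : d ≤ sInf (Set.range fun i : Fin n => loci F C i) + 1 := by
    rw [← hi1]
    exact hloc_ge i1
  omega
end
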